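/- arXiv:1109.3065 — 2 statements merged into one kernel-verified Lean document; each statement's English description precedes it below -/
import Mathlib

section
/- Let R be a ring and I an ideal of R possessing a polynormal generating sequence u_1, ..., u_n (i.e., {u_1,...,u_n} generates I as a two-sided ideal and for each i, the image of u_i in R modulo the ideal generated by u_1,...,u_{i-1} is normal). Then I is generated as a left ideal of R by {u_1, ..., u_n}, and also generated as a right ideal by the same set. -/
/-!
Let `M` be the left ideal generated by the `u i`. Since `M` is a left ideal, a two-sided ideal
`span s` lies in `M` as soon as `x * b ∈ M` for all `x ∈ s` and `b`. By well-founded induction on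
`i`, this gives `span {u j | j < i} ⊆ M`, and then normality writes `u i * r` as `s * u i` plus an
element of that span, so `u i * r ∈ M`. Hence `M` is two-sided and equals the ideal generated by
the `u i`. The right-ideal statement is the mirror image.
-/

namespace TwoSidedIdeal

section SpanSubset

variable {R : Type*} [Ring R] {s : Set R}

open scoped Pointwise in
theorem coe_span_subset_addSubgroup {A : AddSubgroup R} (h : ∀ x ∈ s, ∀ a b : R, a * x * b ∈ A) :
    (span s : Set R) ⊆ A := fun _ hz ↦
  (AddSubgroup.closure_le A).2 (by rintro - ⟨-, ⟨a, -, x, hx, rfl⟩, b, -, rfl⟩; exact h x hx a b)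
    (mem_span_iff_mem_addSubgroup_closure.1 hz)

theorem coe_span_subset_of_mul_right_mem {M : Submodule R R} (h : ∀ x ∈ s, ∀ b : R, x * b ∈ M) :
    (span s : Set R) ⊆ M :=
  coe_span_subset_addSubgroup (A := M.toAddSubgroup) fun x hx a b ↦ by
    simpa [mul_assoc] using M.smul_mem a (h x hx b)

theorem coe_span_subset_of_mul_left_mem {N : Submodule Rᵐᵒᵖ R} (h : ∀ x ∈ s, ∀ a : R, a * x ∈ N) :
    (span s : Set R) ⊆ N :=
  coe_span_subset_addSubgroup (A := N.toAddSubgroup) fun x hx a b ↦ by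
    simpa using N.smul_mem (MulOpposite.op b) (h x hx a)

end SpanSubset

section Polynormal

variable {R ι : Type*} [Ring R] [Preorder ι] [WellFoundedLT ι] {u : ι → R}

theorem coe_span_range_eq_leftSpan
    (hu : ∀ i r, ∃ s, u i * r - s * u i ∈ span {x | ∃ j, j < i ∧ x = u j}) :
    (span (Set.range u) : Set R) = Submodule.span R (Set.range u) := by
  set M := Submodule.span R (Set.range u)
  have hmul (i : ι) : ∀ r, u i * r ∈ M := by
    induction i using WellFoundedLT.induction with
    | _ i ih =>
      intro r
      obtain ⟨s, hs⟩ := hu i r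
      have hsM : u i * r - s * u i ∈ M :=
        coe_span_subset_of_mul_right_mem (by rintro - ⟨j, hj, rfl⟩; exact ih j hj) hs
      simpa using M.add_mem (M.smul_mem s (Submodule.subset_span ⟨i, rfl⟩)) hsM
  refine subset_antisymm (coe_span_subset_of_mul_right_mem ?_) ?_
  · rintro - ⟨i, rfl⟩
    exact hmul i
  · exact (Submodule.span_le (p := .ofClass (span (Set.range u)))).2 subset_span

theorem coe_span_range_eq_rightSpan
    (hu : ∀ i r, ∃ s, r * u i - u i * s ∈ span {x | ∃ j, j < i ∧ x = u j}) :
    (span (Set.range u) : Set R) = Submodule.span Rᵐᵒᵖ (Set.range u) := by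
  set N := Submodule.span Rᵐᵒᵖ (Set.range u)
  have hmul (i : ι) : ∀ r, r * u i ∈ N := by
    induction i using WellFoundedLT.induction with
    | _ i ih =>
      intro r
      obtain ⟨s, hs⟩ := hu i r
      have hsN : r * u i - u i * s ∈ N :=
        coe_span_subset_of_mul_left_mem (by rintro - ⟨j, hj, rfl⟩; exact ih j hj) hs
      simpa using N.add_mem (N.smul_mem (MulOpposite.op s) (Submodule.subset_span ⟨i, rfl⟩)) hsN
  refine subset_antisymm (coe_span_subset_of_mul_left_mem ?_) ?_
  · rintro - ⟨i, rfl⟩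
    exact hmul i
  · -- not a global instance: it would clash with the left `SMulMemClass` through the `outParam`
    have := instSMulMemClassMulOpposite (R := R)
    exact (Submodule.span_le (p := .ofClass (span (Set.range u)))).2 subset_span

end Polynormal

end TwoSidedIdeal

/-- An ideal with a polynormal generating sequence is generated by that set
both as a left ideal and as a right ideal. -/
theorem polynormal_left_right_generation {R : Type*} [Ring R] (n : ℕ) (u : Fin n → R)
    (I : TwoSidedIdeal R)
    (hgen : I = TwoSidedIdeal.span (Set.range u))
    (hnorm : ∀ i : Fin n,
      (∀ r : R, ∃ s : R,
        u i * r - s * u i ∈ TwoSidedIdeal.span {x | ∃ j : Fin n, j < i ∧ x = u j}) ∧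
      (∀ r : R, ∃ s : R,
        r * u i - u i * s ∈ TwoSidedIdeal.span {x | ∃ j : Fin n, j < i ∧ x = u j})) :
    (I : Set R) = (Submodule.span R (Set.range u) : Submodule R R) ∧
    (I : Set R) = (Submodule.span Rᵐᵒᵖ (Set.range u) : Submodule Rᵐᵒᵖ R) := by
  subst hgen
  exact ⟨TwoSidedIdeal.coe_span_range_eq_leftSpan fun i ↦ (hnorm i).1,
    TwoSidedIdeal.coe_span_range_eq_rightSpan fun i ↦ (hnorm i).2⟩
end

section
/- Let R be a ring with an action of a group Γ by ring automorphisms, and let I ⊊ I' be two Γ-stable ideals of R with I prime. If I' possesses a Γ-polynormal generating sequence u_1, ..., u_n in R, then there exists an element u ∈ I' with u ∉ I such that u is Γ-normal in R modulo I. -/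
/-! Take the first generator `u i` outside `I`; it exists since `I' ⊄ I`. All earlier generators
lie in `I`, so the ideal they span does too, and the normality of `u i` modulo that ideal descends
to normality modulo `I`. -/

namespace TwoSidedIdeal

theorem exists_first_notMem_of_span_range_not_le {R ι : Type*} [Ring R] [Preorder ι]
    [WellFoundedLT ι] {I : TwoSidedIdeal R} {u : ι → R} (h : ¬span (Set.range u) ≤ I) :
    ∃ i, u i ∉ I ∧ span {x | ∃ j, j < i ∧ x = u j} ≤ I := by
  have hex : ∃ i, u i ∉ I := by
    contrapose! h
    exact span_le.mpr (Set.range_subset_iff.mpr h)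
  obtain ⟨i, hiI, hmin⟩ := wellFounded_lt.has_min {i | u i ∉ I} hex
  refine ⟨i, hiI, span_le.mpr ?_⟩
  rintro _ ⟨j, hji, rfl⟩
  by_contra hjI
  exact hmin j hjI hji

end TwoSidedIdeal

theorem gamma_polynormal_separation_general {R Γ : Type*} [Ring R] [Group Γ] [MulSemiringAction Γ R]
    (I I' : TwoSidedIdeal R)
    (hII' : I < I')
    (n : ℕ) (u : Fin n → R)
    (hgen : I' = TwoSidedIdeal.span (Set.range u))
    (hnorm : ∀ i : Fin n, ∃ g : Γ, ∀ r : R,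
      u i * r - (g • r) * u i ∈ TwoSidedIdeal.span {x | ∃ j : Fin n, j < i ∧ x = u j}) :
    ∃ u₀ ∈ I', u₀ ∉ I ∧ ∃ g : Γ, ∀ r : R, u₀ * r - (g • r) * u₀ ∈ I := by
  subst hgen
  obtain ⟨i, hiI, hprefix⟩ := TwoSidedIdeal.exists_first_notMem_of_span_range_not_le hII'.not_ge
  obtain ⟨g, hg⟩ := hnorm i
  exact ⟨u i, TwoSidedIdeal.subset_span ⟨i, rfl⟩, hiI, g, fun r => hprefix (hg r)⟩

/-- If a Γ-stable ideal `I'` has a Γ-polynormal generating sequence, then for any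
Γ-stable prime ideal `I ⊊ I'` there is an element of `I' \ I` which is Γ-normal
modulo `I`. -/
theorem gamma_polynormal_separation {R Γ : Type*} [Ring R] [Group Γ] [MulSemiringAction Γ R]
    (I I' : TwoSidedIdeal R)
    (hIinv : ∀ (g : Γ) (x : R), x ∈ I → g • x ∈ I)
    (hI'inv : ∀ (g : Γ) (x : R), x ∈ I' → g • x ∈ I')
    (hII' : I < I')
    (hIprime : (⊤ : TwoSidedIdeal R) ≠ I ∧
      ∀ a b : R, (∀ r : R, a * r * b ∈ I) → a ∈ I ∨ b ∈ I)
    (n : ℕ) (u : Fin n → R)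
    (hgen : I' = TwoSidedIdeal.span (Set.range u))
    (hnorm : ∀ i : Fin n, ∃ g : Γ, ∀ r : R,
      u i * r - (g • r) * u i ∈ TwoSidedIdeal.span {x | ∃ j : Fin n, j < i ∧ x = u j}) :
    ∃ u₀ ∈ I', u₀ ∉ I ∧ ∃ g : Γ, ∀ r : R, u₀ * r - (g • r) * u₀ ∈ I :=
  gamma_polynormal_separation_general I I' hII' n u hgen hnorm
end
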